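/- arXiv:1608.05855 — 4 statements merged into one kernel-verified Lean document; each statement's English description precedes it below -/
import Mathlib

section
/- For all acceptable conformations C, C' ∈ 𝔠_N, there exist n ∈ ℕ with n ≥ 1 and k_1, …, k_n ∈ ⟦−N,N⟧ such that G^n((C, (k_1, …, k_n, 0, 0, 0, …))) = (C', (0, 0, 0, …)), where (k_1, …, k_n, 0, 0, …) denotes the folding sequence whose first n terms are k_1, …, k_n and all of whose subsequent terms are 0. -/
open scoped BigOperators

namespace HP

/-- A conformation of `N+1` residues in absolute encoding
(the initial residue, always `0`, is omitted): `C k` is the paper's `C_{k+1}`. -/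
abbrev Conf (N : ℕ) := Fin N → ZMod 4

open Classical in
/-- `δ(a,b) = 0` if `a = b`, `1` otherwise. -/
noncomputable def delta {α : Type*} (a b : α) : ℝ := if a = b then 0 else 1

/-- `d_C(C,Č) = Σ_{k=1}^N δ(C_k,Č_k)·2^{N−k}`. -/
noncomputable def dC (N : ℕ) (C C' : Conf N) : ℝ :=
  ∑ k : Fin N, delta (C k) (C' k) * (2 : ℝ) ^ (N - 1 - (k : ℕ))

/-- `d_F(F,F̌) = (9/(2N))·Σ_{k=0}^∞ |F^k − F̌^k|/10^{k+1}`. -/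
noncomputable def dF (N : ℕ) (F F' : ℕ → ℤ) : ℝ :=
  (9 / (2 * (N : ℝ))) * ∑' k : ℕ, |((F k : ℝ)) - ((F' k : ℝ))| / 10 ^ (k + 1)

/-- `d((C,F),(Č,F̌)) = d_C(C,Č) + d_F(F,F̌)`. -/
noncomputable def distX (N : ℕ) (X Y : Conf N × (ℕ → ℤ)) : ℝ :=
  dC N X.1 Y.1 + dF N X.2 Y.2

/-- A folding sequence takes values in `⟦−N,N⟧`. -/
def validSeq (N : ℕ) (F : ℕ → ℤ) : Prop := ∀ k, |F k| ≤ (N : ℤ)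

/-- The fold map `f_k`: residues with (paper) index `≥ |k|` are rotated by
`f^{sign k}` where `f x = x + 1` (in `ℤ/4ℤ`); `f_0 = id`. -/
def foldMap (N : ℕ) (k : ℤ) (C : Conf N) : Conf N :=
  fun j => if ((j : ℕ) : ℤ) + 1 < |k| then C j else C j + (Int.sign k : ZMod 4)

/-- The folding dynamics `G(C,F) = (f_{i(F)}(C), σ(F))`. -/
def G (N : ℕ) : Conf N × (ℕ → ℤ) → Conf N × (ℕ → ℤ) :=
  fun X => (foldMap N (X.2 0) X.1, fun n => X.2 (n + 1))

/-- The shift `σ` on folding sequences. -/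
def shiftF (F : ℕ → ℤ) : ℕ → ℤ := fun k => F (k + 1)

/-- Unit move in the 2D lattice associated with an absolute encoding letter. -/
def step (c : ZMod 4) : ℤ × ℤ :=
  if c = 0 then (1, 0) else if c = 1 then (0, -1) else if c = 2 then (-1, 0) else (0, 1)

/-- `pos N C i` is the lattice point `X_i` of the 2D representation `p(C)`. -/
def pos (N : ℕ) (C : Conf N) : ℕ → ℤ × ℤ
  | 0 => (0, 0)
  | i + 1 => pos N C i + (if h : i < N then step (C ⟨i, h⟩) else 0)

/-- The SAW requirement: the lattice points `X_0, …, X_N` are pairwise distinct. -/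
def SAW (N : ℕ) (C : Conf N) : Prop :=
  ∀ i j : ℕ, i ≤ N → j ≤ N → pos N C i = pos N C j → i = j

/-- Successive application of fold maps `f_{k_1}, …, f_{k_n}`. -/
def folds (N : ℕ) : Conf N → List ℤ → Conf N
  | C, [] => C
  | C, k :: t => folds N (foldMap N k C) t

/-- The set `𝔠_N` of acceptable conformations: obtained from `(0,…,0)` by a
nonempty sequence of folds in `⟦−N,N⟧`, all intermediate conformations
(including the initial and final ones) satisfying the SAW requirement. -/
def acceptable (N : ℕ) (C : Conf N) : Prop :=
  ∃ L : List ℤ, L ≠ [] ∧ (∀ k ∈ L, |k| ≤ (N : ℤ)) ∧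
    folds N (fun _ => 0) L = C ∧
    ∀ p : List ℤ, p <+: L → SAW N (folds N (fun _ => 0) p)

/-- Membership in the phase space `X = 𝔠_N × ⟦−N,N⟧^ℕ`. -/
def inX (N : ℕ) (X : Conf N × (ℕ → ℤ)) : Prop :=
  acceptable N X.1 ∧ validSeq N X.2

/-- `U` is open in the metric space `(X, d)` (relative topology on `𝔠_N × ⟦−N,N⟧^ℕ`). -/
def openIn (N : ℕ) (U : Set (Conf N × (ℕ → ℤ))) : Prop :=
  ∀ x ∈ U, ∃ ε > (0 : ℝ), ∀ y, inX N y → distX N x y < ε → y ∈ U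

/-- `A` is closed in the metric space `(X, d)` (relative topology). -/
def closedIn (N : ℕ) (A : Set (Conf N × (ℕ → ℤ))) : Prop :=
  ∀ x, inX N x → x ∉ A → ∃ ε > (0 : ℝ), ∀ y, inX N y → distX N x y < ε → y ∉ A

lemma foldMap_neg_foldMap (N : ℕ) (k : ℤ) (C : Conf N) :
    foldMap N (-k) (foldMap N k C) = C := by
  funext j
  simp only [foldMap, abs_neg]
  by_cases h : ((j : ℕ) : ℤ) + 1 < |k|
  · simp [h]
  · simp only [h, if_false, Int.sign_neg, Int.cast_neg]
    ring

lemma folds_append (N : ℕ) (C : Conf N) (L1 L2 : List ℤ) :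
    folds N C (L1 ++ L2) = folds N (folds N C L1) L2 := by
  induction L1 generalizing C with
  | nil => rfl
  | cons k t ih => simp [folds, ih]

lemma folds_unfold (N : ℕ) (C : Conf N) (L : List ℤ) :
    folds N (folds N C L) ((L.map (fun k => -k)).reverse) = C := by
  induction L generalizing C with
  | nil => rfl
  | cons k t ih =>
    simp only [folds, List.map_cons, List.reverse_cons, folds_append, ih]
    simp [folds, foldMap_neg_foldMap]

lemma iterate_G (N : ℕ) (L : List ℤ) (C : Conf N) :
    (G N)^[L.length] (C, fun m => L.getD m 0) = (folds N C L, fun _ => (0 : ℤ)) := by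
  induction L generalizing C with
  | nil =>
    simp only [List.length_nil, Function.iterate_zero, id_eq, folds]
    exact congrArg _ (funext fun m => by simp [List.getD])
  | cons k t ih =>
    rw [List.length_cons, Function.iterate_succ_apply]
    have : G N (C, fun m => (k :: t).getD m 0) =
        (foldMap N k C, fun m => t.getD m 0) := by
      simp only [G, List.getD_cons_zero, List.getD_cons_succ]
    rw [this, ih]
    rfl

/-- fundamental lemma: for all acceptable conformations `C, C'`
there are `n ≥ 1` folds `k_1, …, k_n ∈ ⟦−N,N⟧` (here a nonempty list `L`) such
that `G^n((C,(k_1,…,k_n,0,0,…))) = (C',(0,0,…))`. -/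
theorem reach_any_conformation (N : ℕ) (hN : 1 ≤ N) (C C' : Conf N)
    (hC : acceptable N C) (hC' : acceptable N C') :
    ∃ L : List ℤ, L ≠ [] ∧ (∀ k ∈ L, |k| ≤ (N : ℤ)) ∧
      (G N)^[L.length] (C, fun m => L.getD m 0) = (C', fun _ => (0 : ℤ)) := by
  obtain ⟨L1, -, hb1, hL1, -⟩ := hC
  obtain ⟨L2, hne2, hb2, hL2, -⟩ := hC'
  refine ⟨(L1.map (fun k => -k)).reverse ++ L2, by simp [hne2], ?_, ?_⟩
  · intro k hk
    rcases List.mem_append.1 hk with h | h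
    · obtain ⟨x, hx, rfl⟩ := List.mem_map.1 (List.mem_reverse.1 h)
      simpa using hb1 x hx
    · exact hb2 k h
  · rw [iterate_G, folds_append, ← hL1, folds_unfold, hL2]

end HP
end

section
/- The folding process G in the 2D HP square lattice model is chaotic according to Devaney on the phase space X = 𝔠_N × ⟦−N,N⟧^ℕ: (i) the set of periodic points of G is dense in (X,d), and (ii) G is topologically transitive on (X,d), i.e., for all nonempty open subsets U, V of X there exist X ∈ U and k > 0 with G^k(X) ∈ V. -/
open scoped BigOperators

namespace HP

/-- The increment vector of a fold map. -/
def vmap (N : ℕ) (k : ℤ) (j : Fin N) : ZMod 4 :=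
  if ((j : ℕ) : ℤ) + 1 < |k| then 0 else ((Int.sign k : ℤ) : ZMod 4)

lemma foldMap_apply (N : ℕ) (k : ℤ) (C : Conf N) (j : Fin N) :
    foldMap N k C j = C j + vmap N k j := by
  unfold foldMap vmap
  split <;> simp

lemma vmap_neg (N : ℕ) (k : ℤ) (j : Fin N) : vmap N (-k) j = - vmap N k j := by
  unfold vmap
  rw [abs_neg, Int.sign_neg]
  split <;> push_cast <;> simp

lemma G_iter (N n : ℕ) (C : Conf N) (F : ℕ → ℤ) :
    (G N)^[n] (C, F) =
      (fun j => C j + ∑ i ∈ Finset.range n, vmap N (F i) j, fun m => F (m + n)) := by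
  induction n generalizing C F with
  | zero => exact Prod.ext (funext fun j => by simp) (funext fun m => by simp)
  | succ n ih =>
    rw [Function.iterate_succ_apply]
    show (G N)^[n] (foldMap N (F 0) C, fun m => F (m + 1)) = _
    rw [ih]
    refine Prod.ext (funext fun j => ?_) (funext fun m => ?_)
    · simp only [foldMap_apply, Finset.sum_range_succ']
      ring
    · rfl

lemma folds_apply (N : ℕ) (C : Conf N) (L : List ℤ) (j : Fin N) :
    folds N C L j = C j + (L.map (fun k => vmap N k j)).sum := by
  induction L generalizing C with
  | nil => simp [folds]
  | cons a t ih =>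
    simp only [folds, ih, foldMap_apply, List.map_cons, List.sum_cons]
    ring

lemma list_range_map_sum {β : Type*} [AddCommMonoid β] (g : ℕ → β) (n : ℕ) :
    (((List.range n).map g)).sum = ∑ i ∈ Finset.range n, g i := by
  induction n with
  | zero => simp
  | succ n ih => rw [List.range_succ, Finset.sum_range_succ, List.map_append, List.sum_append, ih]; simp

lemma sum_getD (N : ℕ) (j : Fin N) (T : List ℤ) :
    ∑ i ∈ Finset.range T.length, vmap N (T.getD i 0) j
      = (T.map (fun z => vmap N z j)).sum := by
  induction T with
  | nil => simp
  | cons a t ih =>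
    rw [List.length_cons, Finset.sum_range_succ']
    simp only [List.getD_cons_succ, List.getD_cons_zero, ih, List.map_cons, List.sum_cons]
    exact add_comm _ _

lemma getD_mem (L : List ℤ) (i : ℕ) (h : i < L.length) : L.getD i 0 ∈ L := by
  rw [List.getD_eq_getElem?_getD, List.getElem?_eq_getElem h, Option.getD_some]
  exact List.getElem_mem h

lemma negmap_sum (N : ℕ) (j : Fin N) (L : List ℤ) :
    ((L.map (fun z => -z)).map (fun k => vmap N k j)).sum
      = -((L.map (fun k => vmap N k j)).sum) := by
  induction L with
  | nil => simp
  | cons a t ih =>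
    simp only [List.map_cons, List.sum_cons, vmap_neg, ih]
    ring

lemma dC_self (N : ℕ) (C : Conf N) : dC N C C = 0 := by
  unfold dC delta
  simp

lemma dF_le (N M : ℕ) (hN : 1 ≤ N) {F F' : ℕ → ℤ}
    (hF : validSeq N F) (hF' : validSeq N F')
    (hag : ∀ k < M, F k = F' k) :
    dF N F F' ≤ (1 / 10 : ℝ) ^ M := by
  have hNpos : (0 : ℝ) < N := by exact_mod_cast hN
  set a : ℕ → ℝ := fun k => |((F k : ℝ)) - ((F' k : ℝ))| / 10 ^ (k + 1) with ha
  have hnn : ∀ k, 0 ≤ a k := fun k => div_nonneg (abs_nonneg _) (by positivity)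
  have habs : ∀ (G : ℕ → ℤ), validSeq N G → ∀ k, |((G k : ℝ))| ≤ (N : ℝ) := by
    intro G hG k
    have := hG k
    have : ((|G k| : ℤ) : ℝ) ≤ ((N : ℤ) : ℝ) := by exact_mod_cast this
    rw [Int.cast_abs] at this
    exact_mod_cast this
  have hbound : ∀ k, a k ≤ (2 * N) * (1 / 10 : ℝ) ^ (k + 1) := by
    intro k
    have h1 := abs_le.mp (habs F hF k)
    have h2 := abs_le.mp (habs F' hF' k)
    have h3 : |((F k : ℝ)) - ((F' k : ℝ))| ≤ 2 * N :=
      abs_le.mpr ⟨by linarith [h1.1, h2.2], by linarith [h1.2, h2.1]⟩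
    have he : (2*(N:ℝ)) * ((1:ℝ)/10)^(k+1) = 2*(N:ℝ)/10^(k+1) := by
      rw [div_pow, one_pow]
      ring
    rw [he]
    show |((F k : ℝ)) - ((F' k : ℝ))| / 10 ^ (k + 1) ≤ 2*(N:ℝ)/10^(k+1)
    gcongr
  have hgeo : Summable (fun k : ℕ => (2 * N : ℝ) * (1 / 10 : ℝ) ^ (k + 1)) := by
    have h := summable_geometric_of_lt_one (by norm_num : (0:ℝ) ≤ 1/10) (by norm_num)
    have := h.mul_left ((2 * N : ℝ) * (1 / 10))
    refine this.congr fun k => ?_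
    rw [pow_succ]
    ring
  have hsa : Summable a := Summable.of_nonneg_of_le hnn hbound hgeo
  have hzero : ∀ k ∈ Finset.range M, a k = 0 := by
    intro k hk
    rw [ha]
    simp [hag k (Finset.mem_range.mp hk)]
  have hsplit : ∑' k, a k = ∑' k, a (k + M) := by
    rw [← Summable.sum_add_tsum_nat_add M hsa, Finset.sum_eq_zero hzero, zero_add]
  have htail : ∑' k, a (k + M) ≤ ∑' k : ℕ, ((2 * N : ℝ) * (1/10:ℝ)^(M+1)) * (1/10:ℝ)^k := by
    refine Summable.tsum_le_tsum (fun k => ?_) (hsa.comp_injective (add_left_injective M)) ?_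
    · calc a (k + M) ≤ (2 * N) * (1 / 10 : ℝ) ^ (k + M + 1) := hbound _
        _ = ((2 * N : ℝ) * (1/10:ℝ)^(M+1)) * (1/10:ℝ)^k := by ring
    · exact (summable_geometric_of_lt_one (by norm_num) (by norm_num)).mul_left _
  have hgeosum : ∑' k : ℕ, ((2 * N : ℝ) * (1/10:ℝ)^(M+1)) * (1/10:ℝ)^k
      = ((2 * N : ℝ) * (1/10:ℝ)^(M+1)) * (1 - 1/10)⁻¹ := by
    rw [tsum_mul_left, tsum_geometric_of_lt_one (by norm_num) (by norm_num)]
  have hfinal : ∑' k, a k ≤ (2 * N : ℝ) / 9 * (1/10:ℝ)^M := by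
    rw [hsplit]
    refine htail.trans ?_
    rw [hgeosum, pow_succ]
    ring_nf
    nlinarith [pow_pos (show (0:ℝ) < 1/10 by norm_num) M]
  unfold dF
  have h9 : (0:ℝ) ≤ 9 / (2 * N) := by positivity
  calc 9 / (2 * (N:ℝ)) * ∑' k, a k ≤ 9 / (2 * N) * ((2 * N : ℝ) / 9 * (1/10:ℝ)^M) :=
        mul_le_mul_of_nonneg_left hfinal h9
    _ = (1/10:ℝ)^M := by field_simp

/-- the folding process `G` in the 2D HP square lattice model is
chaotic according to Devaney on `(X, d)`, `X = 𝔠_N × ⟦−N,N⟧^ℕ`: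
(i) the periodic points of `G` are dense in `X`, and (ii) `G` is
topologically transitive. -/
theorem G_devaney_chaotic (N : ℕ) (hN : 1 ≤ N) :
    (∀ X : Conf N × (ℕ → ℤ), inX N X → ∀ ε > (0 : ℝ),
      ∃ Y : Conf N × (ℕ → ℤ), inX N Y ∧ distX N X Y < ε ∧
        ∃ n : ℕ, 1 ≤ n ∧ (G N)^[n] Y = Y) ∧
    (∀ U V : Set (Conf N × (ℕ → ℤ)),
      (∀ x ∈ U, inX N x) → openIn N U → U.Nonempty →
      (∀ x ∈ V, inX N x) → openIn N V → V.Nonempty →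
      ∃ x ∈ U, ∃ k : ℕ, 0 < k ∧ (G N)^[k] x ∈ V) := by
  have hNpos : (0 : ℝ) < N := by exact_mod_cast hN
  constructor
  · -- density of periodic points
    rintro ⟨C, F⟩ hX ε hε
    obtain ⟨n0, hn0⟩ := exists_pow_lt_of_lt_one hε (show (1/10 : ℝ) < 1 by norm_num)
    set M := n0 + 1 with hMdef
    set F' : ℕ → ℤ := fun k =>
      if k % (2*M) < M then F (k % (2*M)) else -F (k % (2*M) - M) with hF'
    have hvalid' : validSeq N F' := by
      intro k
      rw [hF']
      dsimp only
      split
      · exact hX.2 _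
      · rw [abs_neg]; exact hX.2 _
    have hag : ∀ k < M, F k = F' k := by
      intro k hk
      rw [hF']
      dsimp only
      rw [Nat.mod_eq_of_lt (by omega), if_pos hk]
    have hper : ∀ m, F' (m + 2*M) = F' m := by
      intro m
      rw [hF']
      dsimp only
      rw [Nat.add_mod_right]
    have hsum : ∀ j, ∑ i ∈ Finset.range (2*M), vmap N (F' i) j = 0 := by
      intro j
      rw [two_mul, Finset.sum_range_add]
      have e1 : ∑ i ∈ Finset.range M, vmap N (F' i) j
          = ∑ i ∈ Finset.range M, vmap N (F i) j :=
        Finset.sum_congr rfl fun i hi => by rw [← hag i (Finset.mem_range.mp hi)]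
      have e2 : ∀ i ∈ Finset.range M, vmap N (F' (M + i)) j = - vmap N (F i) j := by
        intro i hi
        have hi' := Finset.mem_range.mp hi
        have hFv : F' (M + i) = -F i := by
          rw [hF']
          dsimp only
          rw [Nat.mod_eq_of_lt (by omega), if_neg (by omega)]
          have hMi : M + i - M = i := by omega
          rw [hMi]
        rw [hFv, vmap_neg]
      rw [e1, Finset.sum_congr rfl e2, Finset.sum_neg_distrib]
      simp
    refine ⟨(C, F'), ⟨hX.1, hvalid'⟩, ?_, 2*M, by omega, ?_⟩
    · have h1 : dF N F F' ≤ (1/10 : ℝ)^M := dF_le N M hN hX.2 hvalid' hag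
      have h2 : (1/10 : ℝ)^M < ε :=
        lt_of_le_of_lt (pow_le_pow_of_le_one (by norm_num) (by norm_num) (by omega)) hn0
      unfold distX
      dsimp only
      rw [dC_self]
      linarith
    · rw [G_iter]
      refine Prod.ext (funext fun j => ?_) (funext fun m => ?_)
      · dsimp only
        rw [hsum j, add_zero]
      · exact hper m
  · -- topological transitivity
    rintro U V hUX hUopen ⟨x, hxU⟩ hVX hVopen ⟨y, hyV⟩
    obtain ⟨C, F⟩ := x
    obtain ⟨D, Gs⟩ := y
    have hx : inX N (C, F) := hUX _ hxU
    have hy : inX N (D, Gs) := hVX _ hyV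
    obtain ⟨ε, hε, hball⟩ := hUopen _ hxU
    obtain ⟨n0, hn0⟩ := exists_pow_lt_of_lt_one hε (show (1/10 : ℝ) < 1 by norm_num)
    set M := n0 + 1 with hMdef
    obtain ⟨LC, -, hLCb, hLC, -⟩ := hx.1
    obtain ⟨LD, -, hLDb, hLD, -⟩ := hy.1
    set T : List ℤ := (List.range M).map (fun i => -F i) ++ (LC.map (fun z => -z) ++ LD)
      with hT
    set K := M + T.length with hK
    set F'' : ℕ → ℤ := fun k =>
      if k < M then F k else if k < K then T.getD (k - M) 0 else Gs (k - K) with hF''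
    have hTmem : ∀ z ∈ T, |z| ≤ (N : ℤ) := by
      intro z hz
      rw [hT] at hz
      simp only [List.mem_append, List.mem_map, List.mem_range] at hz
      rcases hz with (⟨i, -, rfl⟩ | ⟨w, hw, rfl⟩ | hz)
      · rw [abs_neg]; exact hx.2 i
      · rw [abs_neg]; exact hLCb w hw
      · exact hLDb z hz
    have hvalid'' : validSeq N F'' := by
      intro k
      by_cases h1 : k < M
      · rw [hF'']; simp only [if_pos h1]; exact hx.2 k
      · by_cases h2 : k < K
        · rw [hF'']; simp only [if_neg h1, if_pos h2]
          exact hTmem _ (getD_mem T (k - M) (by omega))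
        · rw [hF'']; simp only [if_neg h1, if_neg h2]; exact hy.2 _
    have hag : ∀ k < M, F k = F'' k := by
      intro k hk
      rw [hF'']
      dsimp only
      rw [if_pos hk]
    have hsum : ∀ j, ∑ i ∈ Finset.range K, vmap N (F'' i) j = D j - C j := by
      intro j
      rw [hK, Finset.sum_range_add]
      have e1 : ∑ i ∈ Finset.range M, vmap N (F'' i) j
          = ∑ i ∈ Finset.range M, vmap N (F i) j :=
        Finset.sum_congr rfl fun i hi => by rw [← hag i (Finset.mem_range.mp hi)]
      have e2 : ∀ i ∈ Finset.range T.length,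
          vmap N (F'' (M + i)) j = vmap N (T.getD i 0) j := by
        intro i hi
        have hi' := Finset.mem_range.mp hi
        have hFv : F'' (M + i) = T.getD i 0 := by
          rw [hF'']
          dsimp only
          rw [if_neg (by omega), if_pos (by omega)]
          have hMi : M + i - M = i := by omega
          rw [hMi]
        rw [hFv]
      rw [e1, Finset.sum_congr rfl e2, sum_getD N j T]
      have eB : (LC.map (fun k => vmap N k j)).sum = C j := by
        have h := folds_apply N (fun _ => 0) LC j
        rw [hLC] at h
        simpa using h.symm
      have eD : (LD.map (fun k => vmap N k j)).sum = D j := by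
        have h := folds_apply N (fun _ => 0) LD j
        rw [hLD] at h
        simpa using h.symm
      have eA : (((List.range M).map (fun i => -F i)).map (fun k => vmap N k j)).sum
          = - ∑ i ∈ Finset.range M, vmap N (F i) j := by
        rw [List.map_map, list_range_map_sum, ← Finset.sum_neg_distrib]
        exact Finset.sum_congr rfl fun i _ => vmap_neg N (F i) j
      rw [hT, List.map_append, List.sum_append, List.map_append, List.sum_append,
        eA, negmap_sum, eB, eD]
      ring
    have hKpos : 0 < K := by omega
    refine ⟨(C, F''), ?_, K, hKpos, ?_⟩
    · refine hball (C, F'') ⟨hx.1, hvalid''⟩ ?_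
      have h1 : dF N F F'' ≤ (1/10 : ℝ)^M := dF_le N M hN hx.2 hvalid'' hag
      have h2 : (1/10 : ℝ)^M < ε :=
        lt_of_le_of_lt (pow_le_pow_of_le_one (by norm_num) (by norm_num) (by omega)) hn0
      unfold distX
      dsimp only
      rw [dC_self]
      linarith
    · rw [G_iter]
      have hEq : ((fun j => C j + ∑ i ∈ Finset.range K, vmap N (F'' i) j,
          fun m => F'' (m + K)) : Conf N × (ℕ → ℤ)) = (D, Gs) := by
        refine Prod.ext (funext fun j => ?_) (funext fun m => ?_)
        · dsimp only
          rw [hsum j]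
          ring
        · dsimp only
          rw [hF'']
          dsimp only
          rw [if_neg (by omega), if_neg (by omega)]
          congr 1
          omega
      rw [hEq]
      exact hyV

end HP
end

section
/- The folding dynamics G has sensitive dependence on initial conditions on (X, d) with constant of sensitivity at least 2^{N−1}: for every X ∈ X = 𝔠_N × ⟦−N,N⟧^ℕ and every r > 0, there exist Y ∈ X with d(X,Y) < r and an integer n ≥ 0 such that d(G^n(X), G^n(Y)) ≥ 2^{N−1}. -/
open scoped BigOperators

namespace HP

lemma iter_snd (N m : ℕ) (X : Conf N × (ℕ → ℤ)) :
    ((G N)^[m] X).2 = fun k => X.2 (k + m) := by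
  induction m generalizing X with
  | zero => simp
  | succ m ih =>
    rw [Function.iterate_succ_apply, ih]
    funext k
    simp [G, add_assoc]

lemma iter_fst_congr (N m : ℕ) (C : Conf N) (F F' : ℕ → ℤ)
    (h : ∀ k < m, F k = F' k) :
    ((G N)^[m] (C, F)).1 = ((G N)^[m] (C, F')).1 := by
  induction m generalizing C F F' with
  | zero => simp
  | succ m ih =>
    rw [Function.iterate_succ_apply, Function.iterate_succ_apply]
    show ((G N)^[m] (foldMap N (F 0) C, fun n => F (n+1))).1
       = ((G N)^[m] (foldMap N (F' 0) C, fun n => F' (n+1))).1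
    rw [h 0 (Nat.succ_pos m)]
    exact ih _ _ _ (fun k hk => h (k+1) (Nat.succ_lt_succ hk))

/-- the effect of a fold on the first residue -/
noncomputable def eff (k : ℤ) : ZMod 4 := if 1 < |k| then 0 else (Int.sign k : ZMod 4)

lemma delta_nonneg {α : Type*} (a b : α) : 0 ≤ delta a b := by
  unfold delta; split <;> norm_num

lemma delta_of_ne {α : Type*} {a b : α} (h : a ≠ b) : delta a b = 1 := by
  unfold delta; rw [if_neg h]

lemma foldMap_zero (N : ℕ) (hN : 0 < N) (k : ℤ) (C : Conf N) :
    foldMap N k C ⟨0, hN⟩ = C ⟨0, hN⟩ + eff k := by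
  unfold foldMap eff
  by_cases h : 1 < |k| <;> simp [h]

lemma tsum_nonneg' (F F' : ℕ → ℤ) :
    0 ≤ ∑' k : ℕ, |((F k : ℝ)) - ((F' k : ℝ))| / 10 ^ (k + 1) :=
  tsum_nonneg fun k => by positivity

lemma dF_nonneg (N : ℕ) (F F' : ℕ → ℤ) : 0 ≤ dF N F F' := by
  apply mul_nonneg (by positivity) (tsum_nonneg' F F')

/-- `G` has sensitive dependence on initial conditions on
`(X, d)` with constant of sensitivity at least `2^{N−1}`. -/
theorem G_sensitive (N : ℕ) (hN : 1 ≤ N) :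
    ∀ X : Conf N × (ℕ → ℤ), inX N X → ∀ r > (0 : ℝ),
      ∃ Y : Conf N × (ℕ → ℤ), inX N Y ∧ distX N X Y < r ∧
        ∃ n : ℕ, distX N ((G N)^[n] X) ((G N)^[n] Y) ≥ (2 : ℝ) ^ (N - 1) := by
  intro X hX r hr
  obtain ⟨C, F⟩ := X
  have hNpos : (0 : ℝ) < N := by exact_mod_cast hN
  -- choose n
  obtain ⟨n, hn⟩ := pow_unbounded_of_one_lt (9 * ((N : ℝ) + 1) / (2 * N * r)) (by norm_num : (1:ℝ) < 10)
  have hbound : 9 / (2 * (N : ℝ)) * (((N : ℝ) + 1) / 10 ^ (n + 1)) < r := by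
    rw [div_lt_iff₀ (by positivity)] at hn
    have h10 : (10 : ℝ) ^ n ≤ 10 ^ (n + 1) := by
      apply pow_le_pow_right₀ (by norm_num) (Nat.le_succ n)
    rw [div_mul_div_comm, div_lt_iff₀ (by positivity)]
    calc 9 * ((N:ℝ) + 1) < 10 ^ n * (2 * N * r) := hn
    _ ≤ 10 ^ (n + 1) * (2 * N * r) := by
        apply mul_le_mul_of_nonneg_right h10 (by positivity)
    _ = r * (2 * N * 10 ^ (n + 1)) := by ring
  set b : ℤ := if F n = 1 then 0 else 1 with hb
  have hbabs : |b| ≤ (N : ℤ) := by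
    rw [hb]; split <;> simp <;> exact_mod_cast hN
  set F' : ℕ → ℤ := Function.update F n b with hF'
  refine ⟨(C, F'), ⟨hX.1, ?_⟩, ?_, n + 1, ?_⟩
  · intro k
    by_cases hk : k = n
    · subst hk; simpa [hF'] using hbabs
    · simpa [hF', Function.update_of_ne hk] using hX.2 k
  · -- distance small
    have hdC : dC N C C = 0 := by
      simp [dC, delta]
    have htsum : ∑' k : ℕ, |((F k : ℝ)) - ((F' k : ℝ))| / 10 ^ (k + 1)
        = |((F n : ℝ)) - ((b : ℝ))| / 10 ^ (n + 1) := by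
      rw [tsum_eq_single n]
      · simp [hF']
      · intro k hk
        simp [hF', Function.update_of_ne hk]
    have habs : |((F n : ℝ)) - ((b : ℝ))| ≤ (N : ℝ) + 1 := by
      have h1 : |(F n : ℝ)| ≤ (N : ℝ) := by
        have := hX.2 n
        rw [← Int.cast_abs]
        exact_mod_cast this
      have h2 : |((b : ℝ))| ≤ 1 := by
        rw [hb]; split <;> norm_num
      calc |((F n : ℝ)) - ((b : ℝ))| ≤ |(F n : ℝ)| + |((b : ℝ))| := abs_sub _ _
        _ ≤ (N : ℝ) + 1 := add_le_add h1 h2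
    show dC N C C + dF N F F' < r
    rw [hdC, zero_add, dF, htsum]
    calc 9 / (2 * (N:ℝ)) * (|((F n : ℝ)) - ((b : ℝ))| / 10 ^ (n + 1))
        ≤ 9 / (2 * (N:ℝ)) * (((N:ℝ) + 1) / 10 ^ (n + 1)) := by gcongr
      _ < r := hbound
  · -- sensitivity at time n+1
    have hfst : ((G N)^[n] (C, F)).1 = ((G N)^[n] (C, F')).1 :=
      iter_fst_congr N n C F F' (fun k hk => by
        simp [hF', Function.update_of_ne (Nat.ne_of_lt hk)])
    have hsX : ((G N)^[n] (C, F)).2 0 = F n := by rw [iter_snd]; simp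
    have hsY : ((G N)^[n] (C, F')).2 0 = b := by rw [iter_snd]; simp [hF']
    set Z := ((G N)^[n] (C, F)).1 with hZ
    have hXn1 : ((G N)^[n+1] (C, F)).1 = foldMap N (F n) Z := by
      rw [Function.iterate_succ_apply']
      show foldMap N (((G N)^[n] (C, F)).2 0) ((G N)^[n] (C, F)).1 = _
      rw [hsX]
    have hYn1 : ((G N)^[n+1] (C, F')).1 = foldMap N b Z := by
      rw [Function.iterate_succ_apply']
      show foldMap N (((G N)^[n] (C, F')).2 0) ((G N)^[n] (C, F')).1 = _
      rw [hsY, ← hfst]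
    have hNpos' : 0 < N := hN
    have heff : eff (F n) ≠ eff b := by
      rw [hb]
      by_cases h1 : F n = 1
      · rw [if_pos h1, h1]
        unfold eff
        norm_num
        decide
      · rw [if_neg h1]
        have heb : eff 1 = 1 := by unfold eff; norm_num
        rw [heb]
        unfold eff
        by_cases h2 : 1 < |F n|
        · rw [if_pos h2]; decide
        · rw [if_neg h2]
          push_neg at h2
          have h2' := abs_le.mp h2
          have h3 : F n = -1 ∨ F n = 0 := by omega
          rcases h3 with h | h <;> rw [h] <;> decide
    have hne : ((G N)^[n+1] (C, F)).1 ⟨0, hNpos'⟩ ≠ ((G N)^[n+1] (C, F')).1 ⟨0, hNpos'⟩ := by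
      rw [hXn1, hYn1, foldMap_zero N hNpos', foldMap_zero N hNpos']
      intro h
      exact heff (add_left_cancel h)
    -- conclude
    show dC N _ _ + dF N _ _ ≥ (2:ℝ) ^ (N - 1)
    have hdC : dC N ((G N)^[n+1] (C, F)).1 ((G N)^[n+1] (C, F')).1 ≥ (2:ℝ) ^ (N - 1) := by
      unfold dC
      have hsum := Finset.single_le_sum (f := fun k : Fin N =>
          delta (((G N)^[n+1] (C, F)).1 k) (((G N)^[n+1] (C, F')).1 k) * (2:ℝ) ^ (N - 1 - (k:ℕ)))
        (fun k _ => mul_nonneg (delta_nonneg _ _) (by positivity))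
        (Finset.mem_univ (⟨0, hNpos'⟩ : Fin N))
      refine le_trans ?_ hsum
      simp only [delta_of_ne hne]
      simp
    have := dF_nonneg N ((G N)^[n+1] (C, F)).2 ((G N)^[n+1] (C, F')).2
    linarith


end HP
end

section
/- The folding dynamics G is unstable on (X, d): for every X ∈ X = 𝔠_N × ⟦−N,N⟧^ℕ, the orbit of X is unstable, i.e., there exists ε > 0 such that for every δ > 0 there exist Y ∈ X and n ∈ ℕ with d(X,Y) < δ and d(G^n(X), G^n(Y)) ≥ ε. -/
open scoped BigOperators

namespace HP

lemma G_iter_snd (N : ℕ) (n : ℕ) (X : Conf N × (ℕ → ℤ)) :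
    ((G N)^[n] X).2 = fun k => X.2 (k + n) := by
  induction n generalizing X with
  | zero => simp
  | succ n ih =>
    rw [Function.iterate_succ_apply, ih]
    funext k
    rfl

lemma G_iter_fst (N : ℕ) (n : ℕ) (X Y : Conf N × (ℕ → ℤ)) (h1 : X.1 = Y.1)
    (h2 : ∀ k < n, X.2 k = Y.2 k) : ((G N)^[n] X).1 = ((G N)^[n] Y).1 := by
  induction n generalizing X Y with
  | zero => simpa
  | succ n ih =>
    rw [Function.iterate_succ_apply, Function.iterate_succ_apply]
    apply ih
    · show foldMap N (X.2 0) X.1 = foldMap N (Y.2 0) Y.1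
      rw [h1, h2 0 (by omega)]
    · intro k hk
      exact h2 (k + 1) (by omega)

lemma dF_single (N : ℕ) (n : ℕ) (F F' : ℕ → ℤ) (h : ∀ k, k ≠ n → F k = F' k) :
    dF N F F' = (9 / (2 * (N : ℝ))) * (|((F n : ℝ)) - ((F' n : ℝ))| / 10 ^ (n + 1)) := by
  unfold dF
  congr 1
  apply tsum_eq_single n
  intro k hk
  rw [h k hk]
  simp

/-- `G` is unstable on `(X, d)`: every orbit is unstable. -/
theorem G_unstable (N : ℕ) (hN : 1 ≤ N) :
    ∀ X : Conf N × (ℕ → ℤ), inX N X →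
      ∃ ε > (0 : ℝ), ∀ δ > (0 : ℝ),
        ∃ Y : Conf N × (ℕ → ℤ), inX N Y ∧ distX N X Y < δ ∧
          ∃ n : ℕ, distX N ((G N)^[n] X) ((G N)^[n] Y) ≥ ε := by
  intro X hX
  have hN0 : (0 : ℝ) < N := by exact_mod_cast hN
  refine ⟨9 / (20 * N), by positivity, ?_⟩
  intro δ hδ
  obtain ⟨n, hn⟩ := pow_unbounded_of_one_lt ((9 / (2 * (N : ℝ))) / δ) (by norm_num : (1 : ℝ) < 10)
  have hsmall : (9 / (2 * (N : ℝ))) / 10 ^ (n + 1) < δ := by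
    rw [div_lt_iff₀ (by positivity)]
    have h1 : (9 / (2 * (N : ℝ))) / δ < 10 ^ (n + 1) :=
      lt_of_lt_of_le hn (pow_le_pow_right₀ (by norm_num) (by omega))
    calc 9 / (2 * (N : ℝ)) = (9 / (2 * (N : ℝ))) / δ * δ := by rw [div_mul_cancel₀ _ (ne_of_gt hδ)]
      _ < 10 ^ (n + 1) * δ := by
          exact mul_lt_mul_of_pos_right h1 hδ
      _ = δ * 10 ^ (n + 1) := by ring
  set c : ℤ := if X.2 n = N then (N : ℤ) - 1 else X.2 n + 1 with hc
  have hvalid := hX.2 n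
  have hc1 : |c| ≤ (N : ℤ) := by
    rw [hc]
    split_ifs with h
    · rw [abs_le] at hvalid ⊢; omega
    · rw [abs_le] at hvalid ⊢; omega
  have hc3 : |X.2 n - c| = 1 := by
    rw [hc]
    split_ifs with h
    · rw [h]; simp
    · simp
  have hc3R : |((X.2 n : ℝ)) - ((c : ℝ))| = 1 := by
    rw [← Int.cast_sub, ← Int.cast_abs, hc3, Int.cast_one]
  set F' : ℕ → ℤ := Function.update X.2 n c with hF'
  have hagree : ∀ k, k ≠ n → X.2 k = F' k := by
    intro k hk
    rw [hF', Function.update_of_ne hk]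
  have hF'n : F' n = c := by rw [hF', Function.update_self]
  refine ⟨(X.1, F'), ⟨hX.1, ?_⟩, ?_, n, ?_⟩
  · intro k
    show |F' k| ≤ (N : ℤ)
    by_cases hk : k = n
    · rw [hk, hF'n]; exact hc1
    · rw [← hagree k hk]; exact hX.2 k
  · show dC N X.1 X.1 + dF N X.2 F' < δ
    rw [dC_self, zero_add, dF_single N n X.2 F' hagree, hF'n, hc3R]
    calc 9 / (2 * (N : ℝ)) * (1 / 10 ^ (n + 1))
        = 9 / (2 * (N : ℝ)) / 10 ^ (n + 1) := by ring
      _ < δ := hsmall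
  · have hfst : ((G N)^[n] X).1 = ((G N)^[n] (X.1, F')).1 := by
      apply G_iter_fst
      · rfl
      · intro k hk
        exact hagree k (by omega)
    show dC N _ _ + dF N _ _ ≥ 9 / (20 * N)
    rw [hfst, dC_self, zero_add, G_iter_snd, G_iter_snd]
    have heq : dF N (fun k => X.2 (k + n)) (fun k => F' (k + n))
        = (9 / (2 * (N : ℝ))) * (|((X.2 (0 + n) : ℝ)) - ((F' (0 + n) : ℝ))| / 10 ^ (0 + 1)) := by
      apply dF_single
      intro k hk
      exact hagree (k + n) (by omega)
    rw [heq]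
    simp only [Nat.zero_add, hF'n, hc3R]
    rw [ge_iff_le]
    calc (9 : ℝ) / (20 * N) = 9 / (2 * N) * (1 / 10 ^ 1) := by ring
      _ ≤ 9 / (2 * N) * (1 / 10 ^ (0 + 1)) := by norm_num

end HP
end
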